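/- For a tangential equable quadrilateral OABC with consecutive side lengths a,b,c,d (so a+c=b+d and area equals perimeter, inradius 2), one has (K_A − (a+b))(K_O − (a+d)) = bd − ac, where K_A is the area of triangle OAB and K_O is the area of triangle COA. -/

import Mathlib

/-- Signed area of the triangle with vertices `P`, `Q`, `R` in the Euclidean plane. -/
noncomputable def sarea2 (P Q R : EuclideanSpace ℝ (Fin 2)) : ℝ :=
  ((Q 0 - P 0) * (R 1 - P 1) - (Q 1 - P 1) * (R 0 - P 0)) / 2

/-! Apply the linear functional `X ↦ sarea2 X C 0` to both incenter formulas. The first gives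
`area(I C O) = d`; the second rewrites `KA * area(I C O)` in terms of `KC` and `KO`, giving
`a KC + (KA - a - b) KO = d KA`. Equability `KA + KC = 2(a + c)` and `a + c = b + d` turn this into
the claimed identity. -/

theorem sarea2_rotate (P Q R : EuclideanSpace ℝ (Fin 2)) : sarea2 P Q R = sarea2 R P Q := by
  simp only [sarea2]
  ring

theorem sarea2_self_left (P Q : EuclideanSpace ℝ (Fin 2)) : sarea2 P P Q = 0 := by
  simp only [sarea2]
  ring

noncomputable def sarea2LinearLeft (C : EuclideanSpace ℝ (Fin 2)) :
    EuclideanSpace ℝ (Fin 2) →ₗ[ℝ] ℝ where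
  toFun X := sarea2 X C 0
  map_add' X Y := by
    simp only [sarea2, PiLp.add_apply, PiLp.zero_apply]
    ring
  map_smul' t X := by
    simp only [sarea2, PiLp.smul_apply, PiLp.zero_apply, smul_eq_mul, RingHom.id_apply]
    ring

@[simp]
theorem sarea2LinearLeft_apply (C X : EuclideanSpace ℝ (Fin 2)) :
    sarea2LinearLeft C X = sarea2 X C 0 :=
  rfl

/-- The triangle `I C 0` spanned by the incenter `I` and the side `C 0` of length `d` has height
equal to the inradius `2`, hence area `d`. -/
theorem sarea2_eq_of_smul_eq_smul_add_smul {A C I : EuclideanSpace ℝ (Fin 2)} {a d : ℝ}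
    (hA : sarea2 A C 0 ≠ 0) (hI : sarea2 A C 0 • I = a • C + d • A) :
    sarea2 I C 0 = d := by
  have h := congrArg (sarea2LinearLeft C) hI
  simp only [map_add, map_smul, sarea2LinearLeft_apply, sarea2_self_left, smul_eq_mul,
    mul_zero, zero_add] at h
  exact mul_left_cancel₀ hA (h.trans (mul_comm _ _))

theorem stmt2_general (A B C I : EuclideanSpace ℝ (Fin 2)) (a b c d KO KA KC : ℝ)
    (hKO : KO = sarea2 C 0 A) (hKC : KC = sarea2 B C 0)
    (hKOpos : 0 < KO)
    (htang : a + c = b + d)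
    (hequable : KA + KC = 2 * (a + c))
    (hI1 : KO • I = a • C + d • A)
    (hI2 : KA • (I - A) = a • (B - A) - b • A) :
    (KA - (a + b)) * (KO - (a + d)) = b * d - a * c := by
  rw [sarea2_rotate] at hKO
  subst hKO hKC
  have hIC : sarea2 I C 0 = d := sarea2_eq_of_smul_eq_smul_add_smul hKOpos.ne' hI1
  have hsplit := congrArg (sarea2LinearLeft C) hI2
  simp only [map_sub, map_smul, sarea2LinearLeft_apply, hIC, smul_eq_mul] at hsplit
  linear_combination -hsplit - a * hequable - a * htang

/-- For a tangential equable quadrilateral `OABC` (vertices regarded as vectors from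
`O = 0`, inradius `2`, so the incenter `I` satisfies `K_O • I = a • C + d • A` and
`K_A • (I - A) = a • (B - A) - b • A`), one has
`(K_A - (a+b)) * (K_O - (a+d)) = b*d - a*c`. -/
theorem stmt2 (A B C I : EuclideanSpace ℝ (Fin 2)) (a b c d KO KA KC : ℝ)
    (ha : a = dist (0 : EuclideanSpace ℝ (Fin 2)) A) (hb : b = dist A B)
    (hc : c = dist B C) (hd : d = dist C (0 : EuclideanSpace ℝ (Fin 2)))
    (hKO : KO = sarea2 C 0 A) (hKA : KA = sarea2 0 A B) (hKC : KC = sarea2 B C 0)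
    (hKOpos : 0 < KO) (hKApos : 0 < KA)
    (htang : a + c = b + d)
    (hequable : KA + KC = 2 * (a + c))
    (hI1 : KO • I = a • C + d • A)
    (hI2 : KA • (I - A) = a • (B - A) - b • A) :
    (KA - (a + b)) * (KO - (a + d)) = b * d - a * c :=
  stmt2_general A B C I a b c d KO KA KC hKO hKC hKOpos htang hequable hI1 hI2
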